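/- There exist two MatP instances I_A and I_B on the same complete bipartite graph with three workers and three firms such that every agent's preferences in I_A and I_B coincide except for the workers' preferences, each instance admits a popular matching (in fact each admits exactly three perfect popular matchings), but no matching is popular for both I_A and I_B, while the fractional matching assigning value 1/3 to every edge has nonnegative expected popularity margin against every matching in both instances. In particular, the intersection of the popularity polytopes of two instances can be nonempty while containing no integral point. -/
import Mathlib


open Classical

/-- An instance of matching under preferences (MatP): a bipartite graph on
workers `W` and firms `F` together with, for each agent, a strict linear order
on its neighbors (`pref x y z` means `x` strictly prefers `y` to `z`). -/
structure MatP (α : Type*) where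
  W : Finset α
  F : Finset α
  disjWF : Disjoint W F
  adj : α → α → Prop
  adj_symm : ∀ x y, adj x y → adj y x
  adj_loopless : ∀ x, ¬ adj x x
  adj_bipartite : ∀ x y, adj x y → (x ∈ W ∧ y ∈ F) ∨ (x ∈ F ∧ y ∈ W)
  pref : α → α → α → Prop
  pref_adj : ∀ x y z, pref x y z → adj x y ∧ adj x z
  pref_trans : ∀ x y z w, pref x y z → pref x z w → pref x y w
  pref_irrefl : ∀ x y, ¬ pref x y y
  pref_total : ∀ x y z, adj x y → adj x z → y ≠ z → pref x y z ∨ pref x z y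

/-- `M` is a matching of instance `I`, encoded as a symmetric partial partner
function: `M x = some y` means the edge `{x,y}` belongs to the matching. -/
def IsMatching {α : Type*} (I : MatP α) (M : α → Option α) : Prop :=
  (∀ x y, M x = some y → I.adj x y) ∧ (∀ x y, M x = some y → M y = some x)

/-- Agent `x` prefers (partner) option `o` to option `o'`:
being matched beats being unmatched, and among partners `x` uses `I.pref`. -/
def Better {α : Type*} (I : MatP α) (x : α) : Option α → Option α → Prop
  | some _, none => True
  | some y, some z => I.pref x y z
  | none, _ => False

/-- The vote of agent `x` between partner options `o` and `o'`. -/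
noncomputable def voteO {α : Type*} (I : MatP α) (x : α) (o o' : Option α) : ℤ :=
  if Better I x o o' then 1 else if Better I x o' o then -1 else 0

/-- Popularity margin `Δ^I(M,M')`: the sum of all agents' votes. -/
noncomputable def margin {α : Type*} [DecidableEq α]
    (I : MatP α) (M M' : α → Option α) : ℤ :=
  ∑ x ∈ I.W ∪ I.F, voteO I x (M x) (M' x)

/-- `M` is popular for `I`: it does not lose against any matching. -/
def Popular {α : Type*} [DecidableEq α] (I : MatP α) (M : α → Option α) : Prop :=
  ∀ M', IsMatching I M' → 0 ≤ margin I M M'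

/-- The expected vote of agent `x` comparing the fractional matching `μ`
with the matching `M` (the standard linear extension of the vote). -/
noncomputable def fracVote {α : Type*} [Fintype α]
    (I : MatP α) (μ : α → α → ℚ) (M : α → Option α) (x : α) : ℚ :=
  (∑ y, μ x y * ((voteO I x (some y) (M x) : ℤ) : ℚ)) +
    (1 - ∑ y, μ x y) * ((voteO I x none (M x) : ℤ) : ℚ)

/-- Expected popularity margin of the fractional matching `μ` against `M`. -/
noncomputable def fracMargin {α : Type*} [Fintype α] [DecidableEq α]
    (I : MatP α) (μ : α → α → ℚ) (M : α → Option α) : ℚ :=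
  ∑ x ∈ I.W ∪ I.F, fracVote I μ M x

/-- `μ` is a fractional matching of `I`. -/
def IsFracMatching {α : Type*} [Fintype α] (I : MatP α) (μ : α → α → ℚ) : Prop :=
  (∀ x y, 0 ≤ μ x y) ∧ (∀ x y, μ x y = μ y x) ∧ (∀ x y, ¬ I.adj x y → μ x y = 0) ∧
  (∀ x, ∑ y, μ x y ≤ 1)


/-! ### Auxiliary concrete development -/

def adjB (x y : Fin 6) : Bool :=
  (decide (x.val < 3) && decide (3 ≤ y.val)) || (decide (y.val < 3) && decide (3 ≤ x.val))

def rkA (x y : Fin 6) : ℕ := if x.val < 3 then y.val - 3 else y.val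

def rkB (x y : Fin 6) : ℕ :=
  if x.val < 3 then (if y.val = 3 then 0 else if y.val = 5 then 1 else 2) else y.val

def pA (x y z : Fin 6) : Bool := adjB x y && adjB x z && decide (rkA x y < rkA x z)
def pB (x y z : Fin 6) : Bool := adjB x y && adjB x z && decide (rkB x y < rkB x z)

def IA : MatP (Fin 6) where
  W := {0, 1, 2}
  F := {3, 4, 5}
  disjWF := by decide
  adj := fun x y => adjB x y = true
  adj_symm := by decide
  adj_loopless := by decide
  adj_bipartite := by decide
  pref := fun x y z => pA x y z = true
  pref_adj := by decide
  pref_trans := by decide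
  pref_irrefl := by decide
  pref_total := by decide

def IB : MatP (Fin 6) where
  W := {0, 1, 2}
  F := {3, 4, 5}
  disjWF := by decide
  adj := fun x y => adjB x y = true
  adj_symm := by decide
  adj_loopless := by decide
  adj_bipartite := by decide
  pref := fun x y z => pB x y z = true
  pref_adj := by decide
  pref_trans := by decide
  pref_irrefl := by decide
  pref_total := by decide

@[simp] lemma IA_adj : IA.adj = fun x y => adjB x y = true := rfl
@[simp] lemma IB_adj : IB.adj = fun x y => adjB x y = true := rfl
@[simp] lemma IA_pref : IA.pref = fun x y z => pA x y z = true := rfl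
@[simp] lemma IB_pref : IB.pref = fun x y z => pB x y z = true := rfl

lemma WF_univ : IA.W ∪ IA.F = (Finset.univ : Finset (Fin 6)) := by decide

lemma WF_univ' : IB.W ∪ IB.F = (Finset.univ : Finset (Fin 6)) := by decide

/-- decode a worker-code triple to a full symmetric partner function -/
def mOf (a b c : Option (Fin 6)) : Fin 6 → Option (Fin 6) := fun x =>
  if x = 0 then a else if x = 1 then b else if x = 2 then c
  else if a = some x then some 0 else if b = some x then some 1
  else if c = some x then some 2 else none

def okO : Option (Fin 6) → Bool
  | none => true
  | some y => decide (3 ≤ y.val)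

def ne2 (a b : Option (Fin 6)) : Bool := !a.isSome || decide (a ≠ b)

def validB (a b c : Option (Fin 6)) : Bool :=
  okO a && okO b && okO c && ne2 a b && ne2 a c && ne2 b c

def betterC (p : Fin 6 → Fin 6 → Fin 6 → Bool) (x : Fin 6) :
    Option (Fin 6) → Option (Fin 6) → Bool
  | some _, none => true
  | some y, some z => p x y z
  | none, _ => false

def voteC (p : Fin 6 → Fin 6 → Fin 6 → Bool) (x : Fin 6) (o o' : Option (Fin 6)) : ℤ :=
  if betterC p x o o' = true then 1 else if betterC p x o' o = true then -1 else 0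

def marginC (p : Fin 6 → Fin 6 → Fin 6 → Bool) (M M' : Fin 6 → Option (Fin 6)) : ℤ :=
  ∑ x : Fin 6, voteC p x (M x) (M' x)

def muB (x y : Fin 6) : ℚ := if adjB x y then (1/3 : ℚ) else 0

def fracC (p : Fin 6 → Fin 6 → Fin 6 → Bool) (M : Fin 6 → Option (Fin 6)) : ℚ :=
  ∑ x : Fin 6, ∑ y : Fin 6, muB x y * ((voteC p x (some y) (M x) : ℤ) : ℚ)

lemma better_iff_A (x : Fin 6) (o o' : Option (Fin 6)) :
    Better IA x o o' ↔ betterC pA x o o' = true := by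
  cases o <;> cases o' <;> simp [Better, betterC]

lemma better_iff_B (x : Fin 6) (o o' : Option (Fin 6)) :
    Better IB x o o' ↔ betterC pB x o o' = true := by
  cases o <;> cases o' <;> simp [Better, betterC]

lemma voteO_A (x : Fin 6) (o o' : Option (Fin 6)) : voteO IA x o o' = voteC pA x o o' := by
  simp only [voteO, voteC, better_iff_A]

lemma voteO_B (x : Fin 6) (o o' : Option (Fin 6)) : voteO IB x o o' = voteC pB x o o' := by
  simp only [voteO, voteC, better_iff_B]

lemma margin_A (M M' : Fin 6 → Option (Fin 6)) : margin IA M M' = marginC pA M M' := by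
  rw [margin, WF_univ, marginC]
  exact Finset.sum_congr rfl fun x _ => voteO_A x (M x) (M' x)

lemma margin_B (M M' : Fin 6 → Option (Fin 6)) : margin IB M M' = marginC pB M M' := by
  rw [margin, WF_univ', marginC]
  exact Finset.sum_congr rfl fun x _ => voteO_B x (M x) (M' x)

/-- characterization of matchings (both instances have the same adjacency) -/
lemma char (M : Fin 6 → Option (Fin 6))
    (ha : ∀ x y, M x = some y → adjB x y = true)
    (hs : ∀ x y, M x = some y → M y = some x) :
    validB (M 0) (M 1) (M 2) = true ∧ M = mOf (M 0) (M 1) (M 2) := by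
  have hok : ∀ w : Fin 6, w.val < 3 → okO (M w) = true := by
    intro w hw
    rcases h : M w with _ | y
    · rfl
    · have h2 := ha w y h
      simp only [adjB, Bool.or_eq_true, Bool.and_eq_true, decide_eq_true_eq] at h2
      simp only [okO, decide_eq_true_eq]
      omega
  have hne : ∀ u v : Fin 6, u ≠ v → ne2 (M u) (M v) = true := by
    intro u v huv
    rcases h : M u with _ | y
    · rfl
    · rcases h' : M v with _ | z
      · simp [ne2]
      · simp only [ne2, Option.isSome_some, Bool.not_true, Bool.false_or,
          decide_eq_true_eq]
        intro he
        have h1 := hs u y h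
        have h2 := hs v z h'
        rw [show z = y from by injection he.symm] at h2
        rw [h1] at h2
        exact huv (by injection h2)
  refine ⟨?_, ?_⟩
  · simp only [validB, Bool.and_eq_true]
    exact ⟨⟨⟨⟨⟨hok 0 (by decide), hok 1 (by decide)⟩, hok 2 (by decide)⟩,
      hne 0 1 (by decide)⟩, hne 0 2 (by decide)⟩, hne 1 2 (by decide)⟩
  · have key : ∀ f : Fin 6, 3 ≤ f.val →
        M f = (if M 0 = some f then some 0 else if M 1 = some f then some 1
          else if M 2 = some f then some 2 else none) := by
      intro f hf
      rcases h : M f with _ | x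
      · have e0 : M 0 ≠ some f := fun h0 => by simpa [h] using hs 0 f h0
        have e1 : M 1 ≠ some f := fun h0 => by simpa [h] using hs 1 f h0
        have e2 : M 2 ≠ some f := fun h0 => by simpa [h] using hs 2 f h0
        simp [e0, e1, e2]
      · have hx3 : x.val < 3 := by
          have h2 := ha f x h
          simp only [adjB, Bool.or_eq_true, Bool.and_eq_true, decide_eq_true_eq] at h2
          omega
        have hxf : M x = some f := hs f x h
        have uniq : ∀ w : Fin 6, M w = some f → w = x := by
          intro w hw
          have h2 := hs w f hw
          rw [h] at h2
          injection h2.symm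
        fin_cases x
        · simp [show M 0 = some f from hxf]
        · have e0 : M 0 ≠ some f := fun h0 => by simpa using uniq 0 h0
          simp [e0, show M 1 = some f from hxf]
        · have e0 : M 0 ≠ some f := fun h0 => by simpa using uniq 0 h0
          have e1 : M 1 ≠ some f := fun h0 => by simpa using uniq 1 h0
          simp [e0, e1, show M 2 = some f from hxf]
        · exact absurd hx3 (by decide)
        · exact absurd hx3 (by decide)
        · exact absurd hx3 (by decide)
    funext x
    fin_cases x
    · rfl
    · rfl
    · rfl
    · exact key 3 (by decide)
    · exact key 4 (by decide)
    · exact key 5 (by decide)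

lemma charA (M : Fin 6 → Option (Fin 6)) (h : IsMatching IA M) :
    validB (M 0) (M 1) (M 2) = true ∧ M = mOf (M 0) (M 1) (M 2) :=
  char M h.1 h.2

lemma charB (M : Fin 6 → Option (Fin 6)) (h : IsMatching IB M) :
    validB (M 0) (M 1) (M 2) = true ∧ M = mOf (M 0) (M 1) (M 2) :=
  char M h.1 h.2

lemma mOf_props : ∀ a b c : Option (Fin 6), validB a b c = true →
    ∀ x y : Fin 6, (mOf a b c x = some y → adjB x y = true) ∧
      (mOf a b c x = some y → mOf a b c y = some x) := by decide

lemma mOf_matching_A (a b c : Option (Fin 6)) (h : validB a b c = true) :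
    IsMatching IA (mOf a b c) :=
  ⟨fun x y hxy => (mOf_props a b c h x y).1 hxy, fun x y hxy => (mOf_props a b c h x y).2 hxy⟩

lemma mOf_matching_B (a b c : Option (Fin 6)) (h : validB a b c = true) :
    IsMatching IB (mOf a b c) :=
  ⟨fun x y hxy => (mOf_props a b c h x y).1 hxy, fun x y hxy => (mOf_props a b c h x y).2 hxy⟩

/-- the six distinguished perfect matchings -/
def MA1 : Fin 6 → Option (Fin 6) := mOf (some 3) (some 4) (some 5)
def MA2 : Fin 6 → Option (Fin 6) := mOf (some 4) (some 5) (some 3)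
def MA3 : Fin 6 → Option (Fin 6) := mOf (some 5) (some 3) (some 4)
def MB1 : Fin 6 → Option (Fin 6) := mOf (some 3) (some 5) (some 4)
def MB2 : Fin 6 → Option (Fin 6) := mOf (some 4) (some 3) (some 5)
def MB3 : Fin 6 → Option (Fin 6) := mOf (some 5) (some 4) (some 3)

lemma popA1 : ∀ a b c : Option (Fin 6), validB a b c = true →
    0 ≤ marginC pA MA1 (mOf a b c) := by decide
lemma popA2 : ∀ a b c : Option (Fin 6), validB a b c = true →
    0 ≤ marginC pA MA2 (mOf a b c) := by decide
lemma popA3 : ∀ a b c : Option (Fin 6), validB a b c = true →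
    0 ≤ marginC pA MA3 (mOf a b c) := by decide
lemma popB1 : ∀ a b c : Option (Fin 6), validB a b c = true →
    0 ≤ marginC pB MB1 (mOf a b c) := by decide
lemma popB2 : ∀ a b c : Option (Fin 6), validB a b c = true →
    0 ≤ marginC pB MB2 (mOf a b c) := by decide
lemma popB3 : ∀ a b c : Option (Fin 6), validB a b c = true →
    0 ≤ marginC pB MB3 (mOf a b c) := by decide

lemma masterA : ∀ a b c : Option (Fin 6), validB a b c = true →
    (∃ a' b' c' : Option (Fin 6), validB a' b' c' = true ∧
      marginC pA (mOf a b c) (mOf a' b' c') < 0) ∨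
    ((∀ x, (mOf a b c x).isSome = true) ∧
      ((a = some 3 ∧ b = some 4 ∧ c = some 5) ∨ (a = some 4 ∧ b = some 5 ∧ c = some 3) ∨
       (a = some 5 ∧ b = some 3 ∧ c = some 4))) := by decide

lemma masterB : ∀ a b c : Option (Fin 6), validB a b c = true →
    (∃ a' b' c' : Option (Fin 6), validB a' b' c' = true ∧
      marginC pB (mOf a b c) (mOf a' b' c') < 0) ∨
    ((∀ x, (mOf a b c x).isSome = true) ∧
      ((a = some 3 ∧ b = some 5 ∧ c = some 4) ∨ (a = some 4 ∧ b = some 3 ∧ c = some 5) ∨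
       (a = some 5 ∧ b = some 4 ∧ c = some 3))) := by decide

/-- a popular matching of IA is one of the three -/
lemma uniqA (M : Fin 6 → Option (Fin 6)) (hM : IsMatching IA M) (hP : Popular IA M) :
    M = MA1 ∨ M = MA2 ∨ M = MA3 := by
  obtain ⟨hv, hMeq⟩ := charA M hM
  rcases masterA _ _ _ hv with ⟨a', b', c', hv', hneg⟩ | ⟨-, h3⟩
  · exfalso
    have := hP (mOf a' b' c') (mOf_matching_A a' b' c' hv')
    rw [hMeq, margin_A] at this
    omega
  · rcases h3 with ⟨h1, h2, h3⟩ | ⟨h1, h2, h3⟩ | ⟨h1, h2, h3⟩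
    · left; rw [hMeq, h1, h2, h3]; rfl
    · right; left; rw [hMeq, h1, h2, h3]; rfl
    · right; right; rw [hMeq, h1, h2, h3]; rfl

lemma uniqB (M : Fin 6 → Option (Fin 6)) (hM : IsMatching IB M) (hP : Popular IB M) :
    M = MB1 ∨ M = MB2 ∨ M = MB3 := by
  obtain ⟨hv, hMeq⟩ := charB M hM
  rcases masterB _ _ _ hv with ⟨a', b', c', hv', hneg⟩ | ⟨-, h3⟩
  · exfalso
    have := hP (mOf a' b' c') (mOf_matching_B a' b' c' hv')
    rw [hMeq, margin_B] at this
    omega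
  · rcases h3 with ⟨h1, h2, h3⟩ | ⟨h1, h2, h3⟩ | ⟨h1, h2, h3⟩
    · left; rw [hMeq, h1, h2, h3]; rfl
    · right; left; rw [hMeq, h1, h2, h3]; rfl
    · right; right; rw [hMeq, h1, h2, h3]; rfl

lemma popular_A (M : Fin 6 → Option (Fin 6))
    (h : ∀ a b c : Option (Fin 6), validB a b c = true → 0 ≤ marginC pA M (mOf a b c)) :
    Popular IA M := by
  intro M' hM'
  obtain ⟨hv, hMeq⟩ := charA M' hM'
  rw [hMeq, margin_A]
  exact h _ _ _ hv

lemma popular_B (M : Fin 6 → Option (Fin 6))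
    (h : ∀ a b c : Option (Fin 6), validB a b c = true → 0 ≤ marginC pB M (mOf a b c)) :
    Popular IB M := by
  intro M' hM'
  obtain ⟨hv, hMeq⟩ := charB M' hM'
  rw [hMeq, margin_B]
  exact h _ _ _ hv

lemma mu_eq : (fun x y => if IA.adj x y then (1/3 : ℚ) else 0) = muB := by
  funext x y
  by_cases h : adjB x y = true
  · simp [muB, h, IA_adj]
  · simp [muB, h, IA_adj]

lemma mu_sum : ∀ x : Fin 6, (∑ y, muB x y) = 1 := by
  intro x
  fin_cases x <;>
    simp [muB, adjB, Fin.sum_univ_six, show ((0:Fin 6):ℕ) = 0 from rfl,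
      show ((1:Fin 6):ℕ) = 1 from rfl, show ((2:Fin 6):ℕ) = 2 from rfl,
      show ((3:Fin 6):ℕ) = 3 from rfl, show ((4:Fin 6):ℕ) = 4 from rfl,
      show ((5:Fin 6):ℕ) = 5 from rfl] <;> norm_num

lemma fracMargin_A (M : Fin 6 → Option (Fin 6)) :
    fracMargin IA muB M = fracC pA M := by
  rw [fracMargin, WF_univ, fracC]
  refine Finset.sum_congr rfl fun x _ => ?_
  rw [fracVote, mu_sum x]
  simp only [voteO_A, sub_self, zero_mul, add_zero]

lemma fracMargin_B (M : Fin 6 → Option (Fin 6)) :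
    fracMargin IB muB M = fracC pB M := by
  rw [fracMargin, WF_univ', fracC]
  refine Finset.sum_congr rfl fun x _ => ?_
  rw [fracVote, mu_sum x]
  simp only [voteO_B, sub_self, zero_mul, add_zero]

def gC (p : Fin 6 → Fin 6 → Fin 6 → Bool) (M : Fin 6 → Option (Fin 6)) : ℤ :=
  ∑ x : Fin 6, ∑ y : Fin 6, (if adjB x y then (1 : ℤ) else 0) * voteC p x (some y) (M x)

lemma fracC_eq (p : Fin 6 → Fin 6 → Fin 6 → Bool) (M : Fin 6 → Option (Fin 6)) :
    fracC p M = (gC p M : ℚ) / 3 := by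
  rw [fracC, gC]
  push_cast
  rw [Finset.sum_div]
  refine Finset.sum_congr rfl fun x _ => ?_
  rw [Finset.sum_div]
  refine Finset.sum_congr rfl fun y _ => ?_
  by_cases h : adjB x y = true <;> simp [muB, h] <;> ring

lemma gA : ∀ a b c : Option (Fin 6), validB a b c = true →
    0 ≤ gC pA (mOf a b c) := by decide

lemma gB : ∀ a b c : Option (Fin 6), validB a b c = true →
    0 ≤ gC pB (mOf a b c) := by decide

lemma fracA : ∀ a b c : Option (Fin 6), validB a b c = true →
    0 ≤ fracC pA (mOf a b c) := by
  intro a b c h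
  rw [fracC_eq]
  exact div_nonneg (by exact_mod_cast gA a b c h) (by norm_num)

lemma fracB : ∀ a b c : Option (Fin 6), validB a b c = true →
    0 ≤ fracC pB (mOf a b c) := by
  intro a b c h
  rw [fracC_eq]
  exact div_nonneg (by exact_mod_cast gB a b c h) (by norm_num)

lemma adjB_symm : ∀ x y : Fin 6, adjB x y = adjB y x := by decide


/-- There are two complete MatP instances with three workers and three firms,
coinciding except on the workers' preferences, each admitting exactly three
perfect popular matchings, with no common popular matching, while the fractional
matching putting 1/3 on every edge has nonnegative expected popularity margin
against every matching in both instances. -/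
theorem exists_no_integral_point_in_popularity_polytopes_intersection :
    ∃ (IA IB : MatP (Fin 6)),
      IA.W = IB.W ∧ IA.F = IB.F ∧ IA.adj = IB.adj ∧
      IA.W.card = 3 ∧ IA.F.card = 3 ∧
      (∀ w ∈ IA.W, ∀ f ∈ IA.F, IA.adj w f) ∧
      (∀ f ∈ IA.F, ∀ u v, (IA.pref f u v ↔ IB.pref f u v)) ∧
      (∃ M1 M2 M3 : Fin 6 → Option (Fin 6), M1 ≠ M2 ∧ M1 ≠ M3 ∧ M2 ≠ M3 ∧
        (IsMatching IA M1 ∧ (∀ x ∈ IA.W ∪ IA.F, (M1 x).isSome) ∧ Popular IA M1) ∧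
        (IsMatching IA M2 ∧ (∀ x ∈ IA.W ∪ IA.F, (M2 x).isSome) ∧ Popular IA M2) ∧
        (IsMatching IA M3 ∧ (∀ x ∈ IA.W ∪ IA.F, (M3 x).isSome) ∧ Popular IA M3) ∧
        (∀ M, IsMatching IA M → (∀ x ∈ IA.W ∪ IA.F, (M x).isSome) → Popular IA M →
          M = M1 ∨ M = M2 ∨ M = M3)) ∧
      (∃ M1 M2 M3 : Fin 6 → Option (Fin 6), M1 ≠ M2 ∧ M1 ≠ M3 ∧ M2 ≠ M3 ∧
        (IsMatching IB M1 ∧ (∀ x ∈ IB.W ∪ IB.F, (M1 x).isSome) ∧ Popular IB M1) ∧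
        (IsMatching IB M2 ∧ (∀ x ∈ IB.W ∪ IB.F, (M2 x).isSome) ∧ Popular IB M2) ∧
        (IsMatching IB M3 ∧ (∀ x ∈ IB.W ∪ IB.F, (M3 x).isSome) ∧ Popular IB M3) ∧
        (∀ M, IsMatching IB M → (∀ x ∈ IB.W ∪ IB.F, (M x).isSome) → Popular IB M →
          M = M1 ∨ M = M2 ∨ M = M3)) ∧
      (¬ ∃ M, IsMatching IA M ∧ Popular IA M ∧ Popular IB M) ∧
      IsFracMatching IA (fun x y => if IA.adj x y then (1/3 : ℚ) else 0) ∧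
      (∀ M, IsMatching IA M →
        0 ≤ fracMargin IA (fun x y => if IA.adj x y then (1/3 : ℚ) else 0) M) ∧
      (∀ M, IsMatching IB M →
        0 ≤ fracMargin IB (fun x y => if IA.adj x y then (1/3 : ℚ) else 0) M) := by
  refine ⟨IA, IB, rfl, rfl, rfl, rfl, rfl, ?_, ?_, ?_, ?_, ?_, ?_, ?_, ?_⟩
  · -- completeness
    intro w hw f hf
    fin_cases hw <;> fin_cases hf <;> exact rfl
  · -- firms' preferences coincide
    intro f hf u v
    have key : ∀ f u v : Fin 6, 3 ≤ f.val → (pA f u v = pB f u v) := by decide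
    fin_cases hf
    · show pA 3 u v = true ↔ pB 3 u v = true
      rw [key 3 u v (by decide)]
    · show pA 4 u v = true ↔ pB 4 u v = true
      rw [key 4 u v (by decide)]
    · show pA 5 u v = true ↔ pB 5 u v = true
      rw [key 5 u v (by decide)]
  · -- three popular matchings of IA
    refine ⟨MA1, MA2, MA3, ?_, ?_, ?_, ?_, ?_, ?_, ?_⟩
    · intro h; exact absurd (congrFun h 0) (by decide)
    · intro h; exact absurd (congrFun h 0) (by decide)
    · intro h; exact absurd (congrFun h 0) (by decide)
    · exact ⟨mOf_matching_A _ _ _ (by decide), fun x _ => by fin_cases x <;> rfl,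
        popular_A _ popA1⟩
    · exact ⟨mOf_matching_A _ _ _ (by decide), fun x _ => by fin_cases x <;> rfl,
        popular_A _ popA2⟩
    · exact ⟨mOf_matching_A _ _ _ (by decide), fun x _ => by fin_cases x <;> rfl,
        popular_A _ popA3⟩
    · intro M hM _ hP
      exact uniqA M hM hP
  · -- three popular matchings of IB
    refine ⟨MB1, MB2, MB3, ?_, ?_, ?_, ?_, ?_, ?_, ?_⟩
    · intro h; exact absurd (congrFun h 1) (by decide)
    · intro h; exact absurd (congrFun h 0) (by decide)
    · intro h; exact absurd (congrFun h 0) (by decide)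
    · exact ⟨mOf_matching_B _ _ _ (by decide), fun x _ => by fin_cases x <;> rfl,
        popular_B _ popB1⟩
    · exact ⟨mOf_matching_B _ _ _ (by decide), fun x _ => by fin_cases x <;> rfl,
        popular_B _ popB2⟩
    · exact ⟨mOf_matching_B _ _ _ (by decide), fun x _ => by fin_cases x <;> rfl,
        popular_B _ popB3⟩
    · intro M hM _ hP
      exact uniqB M hM hP
  · -- no common popular matching
    rintro ⟨M, hM, hPA, hPB⟩
    have hMB : IsMatching IB M := ⟨hM.1, hM.2⟩
    have h1 := uniqA M hM hPA
    have h2 := uniqB M hMB hPB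
    rcases h1 with h1 | h1 | h1 <;> rcases h2 with h2 | h2 | h2 <;>
      (rw [h1] at h2
       first
       | exact absurd (congrFun h2 0) (by decide)
       | exact absurd (congrFun h2 1) (by decide))
  · -- fractional matching
    rw [mu_eq]
    refine ⟨?_, ?_, ?_, ?_⟩
    · intro x y
      by_cases h : adjB x y = true <;> simp [muB, h]
    · intro x y
      simp only [muB, adjB_symm x y]
    · intro x y h
      rw [IA_adj] at h
      simp only [muB]
      simp [h]
    · intro x
      exact le_of_eq (mu_sum x)
  · -- frac margin nonneg for IA
    intro M hM
    rw [mu_eq]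
    obtain ⟨hv, hMeq⟩ := charA M hM
    rw [hMeq, fracMargin_A]
    exact fracA _ _ _ hv
  · -- frac margin nonneg for IB
    intro M hM
    rw [mu_eq]
    obtain ⟨hv, hMeq⟩ := charB M hM
    rw [hMeq, fracMargin_B]
    exact fracB _ _ _ hv
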